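/- For every $N \in \mathbb{N}_+$ there exists a Borel measurable map $\mathsf{M}_N : [0,1]^N \to [0,1]^{\mathbb{N}_+}$ such that: (1) the first $N$ entries of $\mathsf{M}_N(s_1,\dots,s_N)$ equal $(s_1,\dots,s_N)$; and (2) whenever $(s_1,\dots,s_N)$ is the initial segment of a strictly decreasing sequence of positive reals summing to $1$, the sequence $\mathsf{M}_N(s_1,\dots,s_N)$ is itself a strictly decreasing sequence of positive reals summing to $1$. -/

import Mathlib

/-!
Keep `s₁, …, s_N` and spread the remaining mass `R = 1 - ∑ sᵢ` over a geometric tail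
`R (1 - r) r^k`, which sums to `R`. The tail is strictly decreasing and stays strictly below
`s_N` as soon as its first term `R (1 - r)` does, and `r` is chosen (measurably in `s`) to
guarantee exactly that. On admissible inputs all entries lie in `(0, 1]`, so clamping the
result into `[0, 1]` changes nothing there.
-/

open Finset

def finPrepend {α : Type*} {n : ℕ} (s : Fin n → α) (f : ℕ → α) : ℕ → α :=
  fun j => if h : j < n then s ⟨j, h⟩ else f (j - n)

section finPrepend

variable {α : Type*} {n : ℕ}

lemma finPrepend_apply_fin (s : Fin n → α) (f : ℕ → α) (i : Fin n) :
    finPrepend s f i = s i := by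
  simp [finPrepend]

lemma finPrepend_add (s : Fin n → α) (f : ℕ → α) (k : ℕ) :
    finPrepend s f (k + n) = f k := by
  simp [finPrepend]

lemma forall_finPrepend {p : α → Prop} {s : Fin n → α} {f : ℕ → α}
    (hs : ∀ i, p (s i)) (hf : ∀ k, p (f k)) (j : ℕ) : p (finPrepend s f j) := by
  unfold finPrepend
  split_ifs
  exacts [hs _, hf _]

lemma hasSum_finPrepend [AddCommGroup α] [TopologicalSpace α] [IsTopologicalAddGroup α]
    (s : Fin n → α) {f : ℕ → α} {a : α} (hf : HasSum f a) :
    HasSum (finPrepend s f) (∑ i, s i + a) := by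
  have hhead : ∑ i ∈ range n, finPrepend s f i = ∑ i, s i := by
    rw [← Fin.sum_univ_eq_sum_range]
    simp only [finPrepend_apply_fin]
  rw [← hasSum_nat_add_iff' n, hhead, add_sub_cancel_left]
  simpa only [finPrepend_add] using hf

lemma strictAnti_finPrepend [Preorder α] {s : Fin (n + 1) → α} {f : ℕ → α}
    (hs : StrictAnti s) (hf : StrictAnti f) (hlast : f 0 < s (Fin.last n)) :
    StrictAnti (finPrepend s f) := by
  refine strictAnti_nat_of_succ_lt fun k => ?_
  rcases lt_trichotomy (k + 1) (n + 1) with hk | hk | hk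
  · simp only [finPrepend, dif_pos hk, dif_pos (Nat.lt_of_succ_lt hk)]
    exact hs (Fin.mk_lt_mk.mpr k.lt_succ_self)
  · obtain rfl : k = n := by omega
    have hnext : finPrepend s f (k + 1) = f 0 := by simpa using finPrepend_add s f 0
    have hcur : finPrepend s f k = s (Fin.last k) := finPrepend_apply_fin s f (Fin.last k)
    rwa [hnext, hcur]
  · obtain ⟨m, rfl⟩ : ∃ m, k = m + (n + 1) := ⟨k - (n + 1), by omega⟩
    rw [add_right_comm, finPrepend_add, finPrepend_add]
    exact hf m.lt_succ_self

end finPrepend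

noncomputable def geomTail (R r : ℝ) (k : ℕ) : ℝ := R * (1 - r) * r ^ k

section geomTail

variable {R r : ℝ}

lemma hasSum_geomTail (hr₀ : 0 ≤ r) (hr₁ : r < 1) : HasSum (geomTail R r) R := by
  have h := (hasSum_geometric_of_lt_one hr₀ hr₁).mul_left (R * (1 - r))
  rwa [mul_assoc, mul_inv_cancel₀ (sub_ne_zero.mpr hr₁.ne'), mul_one] at h

lemma geomTail_pos (hR : 0 < R) (hr₀ : 0 < r) (hr₁ : r < 1) (k : ℕ) : 0 < geomTail R r k :=
  mul_pos (mul_pos hR (sub_pos.mpr hr₁)) (pow_pos hr₀ k)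

lemma strictAnti_geomTail (hR : 0 < R) (hr₀ : 0 < r) (hr₁ : r < 1) :
    StrictAnti (geomTail R r) :=
  (pow_right_strictAnti₀ hr₀ hr₁).const_mul (mul_pos hR (sub_pos.mpr hr₁))

end geomTail

/-- The first tail term `R (1 - tailRatio a R)` is `min R a / 2`, strictly below `a`. -/
noncomputable def tailRatio (a R : ℝ) : ℝ := if R ≤ a then 1 / 2 else 1 - a / (2 * R)

section tailRatio

variable {a R : ℝ}

lemma tailRatio_pos (hR : 0 < R) : 0 < tailRatio a R := by
  unfold tailRatio
  split_ifs with h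
  · norm_num
  · rw [sub_pos, div_lt_one (by positivity)]
    linarith

lemma tailRatio_lt_one (ha : 0 < a) (hR : 0 < R) : tailRatio a R < 1 := by
  unfold tailRatio
  split_ifs
  · norm_num
  · have : 0 < a / (2 * R) := by positivity
    linarith

lemma mul_one_sub_tailRatio_lt (ha : 0 < a) (hR : 0 < R) : R * (1 - tailRatio a R) < a := by
  unfold tailRatio
  split_ifs with h
  · linarith
  · have : R * (a / (2 * R)) = a / 2 := by field_simp
    rw [sub_sub_cancel, this]
    linarith

lemma Measurable.tailRatio {β : Type*} [MeasurableSpace β] {f g : β → ℝ}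
    (hf : Measurable f) (hg : Measurable g) : Measurable fun x => tailRatio (f x) (g x) :=
  Measurable.ite (measurableSet_le hg hf) measurable_const
    (measurable_const.sub (hf.div (measurable_const.mul hg)))

end tailRatio

noncomputable def geomCompletion {n : ℕ} (s : Fin (n + 1) → ℝ) : ℕ → ℝ :=
  finPrepend s (geomTail (1 - ∑ i, s i) (tailRatio (s (Fin.last n)) (1 - ∑ i, s i)))

section geomCompletion

variable {n : ℕ}

lemma measurable_geomCompletion : Measurable (geomCompletion (n := n)) := by
  have hR : Measurable fun s : Fin (n + 1) → ℝ => 1 - ∑ i, s i :=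
    measurable_const.sub (Finset.measurable_sum _ fun i _ => measurable_pi_apply i)
  have hr := (measurable_pi_apply (Fin.last n)).tailRatio hR
  refine measurable_pi_lambda _ fun j => ?_
  unfold geomCompletion finPrepend geomTail
  split_ifs
  · exact measurable_pi_apply _
  · exact ((hR.mul (measurable_const.sub hr)).mul (hr.pow_const _))

variable {s : Fin (n + 1) → ℝ} (hpos : ∀ i, 0 < s i) (hsum : ∑ i, s i < 1)
include hpos hsum

lemma hasSum_geomCompletion : HasSum (geomCompletion s) 1 := by
  have hR : 0 < 1 - ∑ i, s i := sub_pos.mpr hsum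
  have h := hasSum_finPrepend s (hasSum_geomTail (R := 1 - ∑ i, s i)
    (tailRatio_pos hR).le (tailRatio_lt_one (hpos (Fin.last n)) hR))
  rwa [add_sub_cancel] at h

lemma geomCompletion_pos (j : ℕ) : 0 < geomCompletion s j := by
  have hR : 0 < 1 - ∑ i, s i := sub_pos.mpr hsum
  exact forall_finPrepend hpos
    (geomTail_pos hR (tailRatio_pos hR) (tailRatio_lt_one (hpos (Fin.last n)) hR)) j

lemma strictAnti_geomCompletion (hs : StrictAnti s) : StrictAnti (geomCompletion s) := by
  have hR : 0 < 1 - ∑ i, s i := sub_pos.mpr hsum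
  have hlast := hpos (Fin.last n)
  refine strictAnti_finPrepend hs
    (strictAnti_geomTail hR (tailRatio_pos hR) (tailRatio_lt_one hlast hR)) ?_
  simpa [geomTail] using mul_one_sub_tailRatio_lt hlast hR

lemma geomCompletion_le_one (j : ℕ) : geomCompletion s j ≤ 1 :=
  le_hasSum (hasSum_geomCompletion hpos hsum) j fun k _ => (geomCompletion_pos hpos hsum k).le

end geomCompletion

lemma sum_range_lt_of_hasSum {t : ℕ → ℝ} {a : ℝ} (h : HasSum t a) (hpos : ∀ j, 0 < t j)
    (k : ℕ) : ∑ i ∈ range k, t i < a :=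
  sub_pos.mp <| hasSum_lt (fun j => (hpos (j + k)).le) (hpos (0 + k)) hasSum_zero
    ((hasSum_nat_add_iff' k).mpr h)

/-- For every `N ≥ 1` there is a Borel measurable map `M_N : [0,1]^N → [0,1]^ℕ` preserving
the first `N` entries and sending every initial segment of a strictly decreasing positive
sequence summing to `1` to a strictly decreasing positive sequence summing to `1`. -/
theorem stmt4 (N : ℕ) (hN : 0 < N) :
    ∃ M : (Fin N → Set.Icc (0:ℝ) 1) → (ℕ → Set.Icc (0:ℝ) 1),
      Measurable M ∧
      (∀ s : Fin N → Set.Icc (0:ℝ) 1, ∀ i : Fin N, (M s (i : ℕ) : ℝ) = (s i : ℝ)) ∧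
      (∀ s : Fin N → Set.Icc (0:ℝ) 1,
        (∃ t : ℕ → ℝ, StrictAnti t ∧ (∀ j, 0 < t j) ∧ (∑' j, t j) = 1 ∧
          ∀ i : Fin N, t (i : ℕ) = (s i : ℝ)) →
        StrictAnti (fun j => (M s j : ℝ)) ∧ (∀ j, 0 < (M s j : ℝ)) ∧
          (∑' j, (M s j : ℝ)) = 1) := by
  obtain ⟨n, rfl⟩ : ∃ n, N = n + 1 := ⟨N - 1, by omega⟩
  let clamp : ℝ → Set.Icc (0:ℝ) 1 := Set.projIcc 0 1 zero_le_one
  refine ⟨fun s j => clamp (geomCompletion (fun i => (s i : ℝ)) j), ?_, ?_, ?_⟩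
  · exact measurable_pi_lambda _ fun j => continuous_projIcc.measurable.comp <|
      (measurable_pi_apply j).comp <| measurable_geomCompletion.comp <|
        measurable_pi_lambda _ fun i => measurable_subtype_coe.comp (measurable_pi_apply i)
  · intro s i
    simp only [clamp, geomCompletion, finPrepend_apply_fin, Set.projIcc_of_mem _ (s i).2]
  · rintro s ⟨t, ht_anti, ht_pos, ht_sum, ht_eq⟩
    have ht : HasSum t 1 := by
      have : Summable t := by
        by_contra h
        simp [tsum_eq_zero_of_not_summable h] at ht_sum
      exact ht_sum ▸ this.hasSum
    have hpos : ∀ i, 0 < (s i : ℝ) := fun i => ht_eq i ▸ ht_pos i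
    have hsum : ∑ i, (s i : ℝ) < 1 := by
      simp only [← ht_eq, Fin.sum_univ_eq_sum_range t]
      exact sum_range_lt_of_hasSum ht ht_pos _
    have hanti : StrictAnti fun i => (s i : ℝ) := fun i j hij => by
      simp only [← ht_eq]
      exact ht_anti hij
    have hclamp : ∀ j, (clamp (geomCompletion (fun i => (s i : ℝ)) j) : ℝ) =
        geomCompletion (fun i => (s i : ℝ)) j := fun j =>
      congrArg Subtype.val <| Set.projIcc_of_mem _
        ⟨(geomCompletion_pos hpos hsum j).le, geomCompletion_le_one hpos hsum j⟩
    simp only [hclamp]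
    exact ⟨strictAnti_geomCompletion hpos hsum hanti, geomCompletion_pos hpos hsum,
      (hasSum_geomCompletion hpos hsum).tsum_eq⟩
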